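/- arXiv:2508.11555 — 6 statements merged into one kernel-verified Lean document; each statement's English description precedes it below -/
import Mathlib

section
/- The metric space (X, d_X) arising from the labeled perfect 2^d-ary tree has doubling dimension at most d: every ball of radius r in X can be covered by at most 2^d balls of radius r/2. -/
/-!
Pick `k` with `2^k ≤ r < 2^(k+1)`. Every leaf within distance `r` of `u` shares with `u` the
ancestor at height `k`, so the ball lies in one subtree whose root has `2^d` children. Leaves of
a common child subtree are at distance at most `2^(k-1) ≤ r/2`, so one leaf per child (obtained
from `u` by changing coordinate `L - k`) gives the cover.
-/

/-- Index of the first coordinate (counting from the root) where two leaves of the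
perfect `2^d`-ary tree of depth `L` differ. -/
noncomputable def firstDiff (d L : ℕ) (u v : Fin L → Fin (2 ^ d)) : ℕ :=
  sInf {i | ∃ hi : i < L, u ⟨i, hi⟩ ≠ v ⟨i, hi⟩}

/-- The 2-HST metric on the `(2^d)^L` leaves of the labeled perfect `2^d`-ary tree:
`d_X(u,v)` is the label `2^(height)` of the LCA of `u` and `v`. -/
noncomputable def treeDist (d L : ℕ) (u v : Fin L → Fin (2 ^ d)) : ℝ :=
  if u = v then 0 else 2 ^ (L - firstDiff d L u v)

/-- `u` and `v` share their ancestor at depth `j` in the tree. -/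
def AgreeBelow {L : ℕ} {α : Type*} (j : ℕ) (u v : Fin L → α) : Prop :=
  ∀ i : Fin L, (i : ℕ) < j → u i = v i

section TreeDist

variable {d L : ℕ} {u v : Fin L → Fin (2 ^ d)}

lemma treeDist_self (u : Fin L → Fin (2 ^ d)) : treeDist d L u u = 0 := if_pos rfl

lemma firstDiff_mem (h : u ≠ v) :
    ∃ hi : firstDiff d L u v < L, u ⟨firstDiff d L u v, hi⟩ ≠ v ⟨firstDiff d L u v, hi⟩ := by
  obtain ⟨i, hi⟩ := Function.ne_iff.mp h
  have hne : {j | ∃ hj : j < L, u ⟨j, hj⟩ ≠ v ⟨j, hj⟩}.Nonempty := ⟨i.1, i.2, hi⟩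
  exact Nat.sInf_mem hne

lemma le_firstDiff {j : ℕ} (h : u ≠ v) (hj : AgreeBelow j u v) : j ≤ firstDiff d L u v := by
  obtain ⟨hl, hne⟩ := firstDiff_mem h
  by_contra! hlt
  exact hne (hj _ hlt)

lemma agreeBelow_firstDiff : AgreeBelow (firstDiff d L u v) u v := by
  intro i hi
  by_contra hne
  exact (Nat.sInf_le ⟨i.2, hne⟩ : firstDiff d L u v ≤ i).not_gt hi

lemma two_le_treeDist (h : u ≠ v) : 2 ≤ treeDist d L u v := by
  obtain ⟨hl, -⟩ := firstDiff_mem h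
  rw [treeDist, if_neg h]
  calc (2 : ℝ) = 2 ^ 1 := (pow_one 2).symm
    _ ≤ 2 ^ (L - firstDiff d L u v) := pow_le_pow_right₀ one_le_two (by omega)

lemma treeDist_le_of_agreeBelow {j : ℕ} (h : AgreeBelow j u v) :
    treeDist d L u v ≤ 2 ^ (L - j) := by
  by_cases huv : u = v
  · rw [huv, treeDist_self]
    positivity
  · rw [treeDist, if_neg huv]
    exact pow_le_pow_right₀ one_le_two (by have := le_firstDiff huv h; omega)

lemma agreeBelow_of_treeDist_lt {k : ℕ} (h : treeDist d L u v < 2 ^ (k + 1)) :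
    AgreeBelow (L - k) u v := by
  by_cases huv : u = v
  · intro i _
    rw [huv]
  · rw [treeDist, if_neg huv, pow_lt_pow_iff_right₀ one_lt_two] at h
    intro i hi
    exact agreeBelow_firstDiff i (by omega)

end TreeDist

lemma AgreeBelow.update {L : ℕ} {α : Type*} {j : ℕ} {u v : Fin L → α}
    (h : AgreeBelow j u v) (hj : j < L) :
    AgreeBelow (j + 1) (Function.update u ⟨j, hj⟩ (v ⟨j, hj⟩)) v := by
  intro i hi
  rcases Nat.lt_or_ge i j with hij | hij
  · rw [Function.update_of_ne (Fin.ne_of_val_ne hij.ne)]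
    exact h i hij
  · obtain rfl : i = ⟨j, hj⟩ := Fin.ext (show (i : ℕ) = j by omega)
    exact Function.update_self ..

lemma exists_cover_ball_pow {d L k : ℕ} (hL : 0 < L) (hk : 1 ≤ k) (u : Fin L → Fin (2 ^ d)) :
    ∃ s : Finset (Fin L → Fin (2 ^ d)), s.card ≤ 2 ^ d ∧
      ∀ v, treeDist d L u v < 2 ^ (k + 1) → ∃ c ∈ s, treeDist d L c v ≤ 2 ^ (k - 1) := by
  have hj : L - k < L := by omega
  refine ⟨Finset.univ.image (Function.update u ⟨L - k, hj⟩), Finset.card_image_le.trans (by simp),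
    fun v hv => ⟨_, Finset.mem_image_of_mem _ (Finset.mem_univ (v ⟨L - k, hj⟩)), ?_⟩⟩
  calc treeDist d L _ v ≤ 2 ^ (L - (L - k + 1)) :=
        treeDist_le_of_agreeBelow ((agreeBelow_of_treeDist_lt hv).update hj)
    _ ≤ 2 ^ (k - 1) := pow_le_pow_right₀ one_le_two (by omega)

theorem stmt3_general (d L : ℕ) (u : Fin L → Fin (2 ^ d)) (r : ℝ) :
    ∃ s : Finset (Fin L → Fin (2 ^ d)), s.card ≤ 2 ^ d ∧
      ∀ v, treeDist d L u v ≤ r → ∃ c ∈ s, treeDist d L c v ≤ r / 2 := by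
  by_cases hball : ∀ v, treeDist d L u v ≤ r → v = u
  · refine ⟨{u}, by simp [Nat.one_le_two_pow], fun v hv => ⟨u, Finset.mem_singleton_self u, ?_⟩⟩
    obtain rfl := hball v hv
    rw [treeDist_self] at hv ⊢
    linarith
  push Not at hball
  obtain ⟨w, hw, hwu⟩ := hball
  have hr : 2 ≤ r := (two_le_treeDist hwu.symm).trans hw
  have hL : 0 < L := by obtain ⟨hl, -⟩ := firstDiff_mem hwu; omega
  obtain ⟨k, hkr, hrk⟩ := exists_nat_pow_near (by linarith : (1 : ℝ) ≤ r) one_lt_two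
  have hk : 1 ≤ k := by
    by_contra! hk0
    simp only [Nat.lt_one_iff.mp hk0, zero_add, pow_one] at hrk
    linarith
  obtain ⟨s, hs, hcover⟩ := exists_cover_ball_pow hL hk u
  refine ⟨s, hs, fun v hv => ?_⟩
  obtain ⟨c, hc, hcv⟩ := hcover v (hv.trans_lt hrk)
  have hhalf : (2 : ℝ) ^ (k - 1) * 2 = 2 ^ k := by rw [← pow_succ, Nat.sub_add_cancel hk]
  exact ⟨c, hc, by linarith⟩

/-- the tree metric has doubling dimension at most `d`: every ball of
radius `r` is covered by at most `2^d` balls of radius `r/2`. -/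
theorem stmt3 (d L : ℕ) (hd : 1 ≤ d) (u : Fin L → Fin (2 ^ d)) (r : ℝ) :
    ∃ s : Finset (Fin L → Fin (2 ^ d)), s.card ≤ 2 ^ d ∧
      ∀ v, treeDist d L u v ≤ r → ∃ c ∈ s, treeDist d L c v ≤ r / 2 :=
  stmt3_general d L u r
end

section
/- Let (X, d_X) be an ultrametric space in which the minimum nonzero pairwise distance is at least 2, and let G = (X, E) be a weighted graph on X with edge weights equal to the metric distances. If the edge (u,v) is not in E, then any u–v path in G has length at least d_X(u,v) + 2. -/
/-- The weight of a path (list of vertices): the sum of the weights of its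
consecutive pairs, where the weight of a pair is its metric distance. -/
def pathWeight {X : Type*} (dX : X → X → ℝ) : List X → ℝ
  | [] => 0
  | [_] => 0
  | a :: b :: l => dX a b + pathWeight dX (b :: l)

/-- `G = (X,E)` (edge weights = distances) is a `t`-spanner of `(X,dX)`:
every pair is joined by a path in `G` of weight at most `t` times its distance. -/
def IsSpanner {X : Type*} (dX : X → X → ℝ) (E : X → X → Prop) (t : ℝ) : Prop :=
  ∀ u v : X, ∃ p : List X, p.Chain' E ∧ p.head? = some u ∧ p.getLast? = some v ∧
    pathWeight dX p ≤ t * dX u v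

/-! Since the first edge `u y` of a `u`–`v` path is not `u v`, the vertex `y` differs from
both `u` and `v`. The rest of the path weighs at least `d(y, v)`, and in an ultrametric
`d(u, y) + d(y, v) = max + min ≥ d(u, v) + 2`, the minimum being a nonzero distance. -/

section Ultrametric

variable {X : Type*} (dX : X → X → ℝ)

theorem dist_le_pathWeight (hself : ∀ u, dX u u = 0)
    (htri : ∀ u v w, dX u w ≤ dX u v + dX v w) :
    ∀ {p : List X} {a b : X}, p.head? = some a → p.getLast? = some b →
      dX a b ≤ pathWeight dX p
  | [], _, _, ha, _ => by simp at ha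
  | [x], a, b, ha, hb => by
      obtain rfl : x = a := by simpa using ha
      obtain rfl : x = b := by simpa using hb
      simp [pathWeight, hself]
  | x :: y :: l, a, b, ha, hb => by
      obtain rfl : x = a := by simpa using ha
      rw [List.getLast?_cons_cons] at hb
      have hrest := dist_le_pathWeight hself htri (p := y :: l) rfl hb
      rw [pathWeight]
      linarith [htri x y b]

theorem dist_nonneg_of_two_le (hself : ∀ u, dX u u = 0)
    (hmin : ∀ u v : X, u ≠ v → 2 ≤ dX u v) (a b : X) : 0 ≤ dX a b := by
  by_cases h : a = b
  · rw [h, hself]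
  · linarith [hmin a b h]

theorem dist_le_add_of_ultra (hself : ∀ u, dX u u = 0)
    (hultra : ∀ u v w, dX u w ≤ max (dX u v) (dX v w))
    (hmin : ∀ u v : X, u ≠ v → 2 ≤ dX u v) (u v w : X) :
    dX u w ≤ dX u v + dX v w :=
  (hultra u v w).trans <| max_le_add_of_nonneg
    (dist_nonneg_of_two_le dX hself hmin u v) (dist_nonneg_of_two_le dX hself hmin v w)

theorem dist_add_two_le_of_ne (hultra : ∀ u v w, dX u w ≤ max (dX u v) (dX v w))
    (hmin : ∀ u v : X, u ≠ v → 2 ≤ dX u v) {u v w : X} (huv : u ≠ v) (hvw : v ≠ w) :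
    dX u w + 2 ≤ dX u v + dX v w := by
  have hmin_ge : 2 ≤ min (dX u v) (dX v w) := le_min (hmin u v huv) (hmin v w hvw)
  linarith [hultra u v w, max_add_min (dX u v) (dX v w)]

end Ultrametric

theorem stmt5_general {X : Type*} (dX : X → X → ℝ)
    (hself : ∀ u, dX u u = 0)
    (hultra : ∀ u v w, dX u w ≤ max (dX u v) (dX v w))
    (hmin : ∀ u v : X, u ≠ v → 2 ≤ dX u v)
    (E : X → X → Prop) (hEirr : ∀ x, ¬ E x x)
    (u v : X) (huv : u ≠ v) (hE : ¬ E u v)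
    (p : List X) (hp : p.Chain' E) (hhead : p.head? = some u)
    (hlast : p.getLast? = some v) :
    dX u v + 2 ≤ pathWeight dX p := by
  match p, hp with
  | [], _ => simp at hhead
  | [x], _ =>
      obtain rfl : x = u := by simpa using hhead
      exact absurd (by simpa using hlast) huv
  | x :: y :: l, hp =>
      obtain rfl : x = u := by simpa using hhead
      rw [List.getLast?_cons_cons] at hlast
      have hxy : E x y := (List.isChain_cons_cons.mp hp).1
      have hyx : x ≠ y := fun h => hEirr x (h ▸ hxy)
      have hyv : y ≠ v := fun h => hE (h ▸ hxy)
      have hrest : dX y v ≤ pathWeight dX (y :: l) :=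
        dist_le_pathWeight dX hself (dist_le_add_of_ultra dX hself hultra hmin) rfl hlast
      rw [pathWeight]
      linarith [dist_add_two_le_of_ne dX hultra hmin hyx hyv]

/-- in an ultrametric with minimum nonzero distance at least 2, if the
edge `(u,v)` is absent from the graph, then every `u`–`v` path in the graph has
length at least `d_X(u,v) + 2`. -/
theorem stmt5 {X : Type*} (dX : X → X → ℝ)
    (hsymm : ∀ u v, dX u v = dX v u) (hself : ∀ u, dX u u = 0)
    (hultra : ∀ u v w, dX u w ≤ max (dX u v) (dX v w))
    (hmin : ∀ u v : X, u ≠ v → 2 ≤ dX u v)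
    (E : X → X → Prop) (hEsymm : Symmetric E) (hEirr : ∀ x, ¬ E x x)
    (u v : X) (huv : u ≠ v) (hE : ¬ E u v)
    (p : List X) (hp : p.Chain' E) (hhead : p.head? = some u)
    (hlast : p.getLast? = some v) :
    dX u v + 2 ≤ pathWeight dX p :=
  stmt5_general dX hself hultra hmin E hEirr u v huv hE p hp hhead hlast
end

section
/- Let (X, d_X) be a finite ultrametric space with minimum nonzero distance at least 2, and let G = (X, E) be a (1+ε)-spanner of X for some ε ∈ (0,1). Then for every pair u, v ∈ X with d_X(u,v) < 2/ε, the edge (u,v) must belong to E. -/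
/-!
A path from `u` to `v` with at least two edges has weight at least `d(u,v) + 2`: by the
ultrametric inequality its weight after the first edge `a → b` is at least `d(b,v)`, and
`d(u,v) ≤ max (d(u,b), d(b,v))`, while the summand not realising the maximum is at least `2`.
A `(1+ε)`-spanner path therefore has a single edge as soon as `ε · d(u,v) < 2`.
-/

section PathWeight

variable {X : Type*} {dX : X → X → ℝ} {E : X → X → Prop}

theorem pathWeight_nonneg (hE : ∀ a b, E a b → 0 ≤ dX a b) :
    ∀ {p : List X}, p.IsChain E → 0 ≤ pathWeight dX p
  | [], _ | [_], _ => le_rfl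
  | a :: b :: l, hp => by
    rw [List.isChain_cons_cons] at hp
    exact add_nonneg (hE a b hp.1) (pathWeight_nonneg hE hp.2)

theorem dist_le_pathWeight_of_ultrametric (hultra : ∀ u v w, dX u w ≤ max (dX u v) (dX v w))
    (hE : ∀ a b, E a b → 0 ≤ dX a b) :
    ∀ {a b w : X} {l : List X}, (a :: b :: l).IsChain E → (a :: b :: l).getLast? = some w →
      dX a w ≤ pathWeight dX (a :: b :: l)
  | a, b, w, [], _, hw => by
    simp only [List.getLast?_cons_cons, List.getLast?_singleton, Option.some.injEq] at hw
    simp [pathWeight, hw]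
  | a, b, w, c :: l, hp, hw => by
    rw [List.getLast?_cons_cons] at hw
    rw [List.isChain_cons_cons] at hp
    have hab := hE a b hp.1
    have htail := dist_le_pathWeight_of_ultrametric hultra hE hp.2 hw
    have htail_nonneg := pathWeight_nonneg hE hp.2
    calc dX a w ≤ max (dX a b) (dX b w) := hultra a b w
      _ ≤ dX a b + pathWeight dX (b :: c :: l) := max_le (by linarith) (by linarith)
      _ = pathWeight dX (a :: b :: c :: l) := rfl

theorem dist_add_le_pathWeight_of_ultrametric
    (hultra : ∀ u v w, dX u w ≤ max (dX u v) (dX v w)) {δ : ℝ} (hδ : 0 ≤ δ)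
    (hE : ∀ a b, E a b → δ ≤ dX a b) {a b c w : X} {l : List X}
    (hp : (a :: b :: c :: l).IsChain E) (hw : (a :: b :: c :: l).getLast? = some w) :
    dX a w + δ ≤ pathWeight dX (a :: b :: c :: l) := by
  have hE₀ : ∀ a b, E a b → 0 ≤ dX a b := fun a b h => hδ.trans (hE a b h)
  rw [List.getLast?_cons_cons] at hw
  rw [List.isChain_cons_cons] at hp
  have hab := hE a b hp.1
  have hbw := dist_le_pathWeight_of_ultrametric hultra hE₀ hp.2 hw
  have hbc : δ ≤ pathWeight dX (b :: c :: l) := by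
    rw [List.isChain_cons_cons] at hp
    have := pathWeight_nonneg hE₀ hp.2.2
    have := hE b c hp.2.1
    simp only [pathWeight]
    linarith
  have hmax := hultra a b w
  show dX a w + δ ≤ dX a b + pathWeight dX (b :: c :: l)
  rcases le_total (dX a b) (dX b w) with h | h
  · rw [max_eq_right h] at hmax; linarith
  · rw [max_eq_left h] at hmax; linarith

end PathWeight

theorem stmt6_general {X : Type*} (dX : X → X → ℝ)
    (hultra : ∀ u v w, dX u w ≤ max (dX u v) (dX v w))
    (hmin : ∀ u v : X, u ≠ v → 2 ≤ dX u v)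
    (ε : ℝ) (hε0 : 0 < ε)
    (E : X → X → Prop) (hEirr : ∀ x, ¬ E x x)
    (hspan : IsSpanner dX E (1 + ε))
    (u v : X) (huv : u ≠ v) (hclose : dX u v < 2 / ε) :
    E u v := by
  have hE : ∀ a b, E a b → 2 ≤ dX a b := fun a b h =>
    hmin a b fun hab => hEirr a (hab ▸ h)
  have hεd : ε * dX u v < 2 := by rwa [lt_div_iff₀ hε0, mul_comm] at hclose
  obtain ⟨p, hp, hu, hv, hweight⟩ := hspan u v
  match p, hu, hv, hp with
  | [a], hu, hv, _ =>
    simp only [List.head?_cons, List.getLast?_singleton, Option.some.injEq] at hu hv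
    exact absurd (hu.symm.trans hv) huv
  | [a, b], hu, hv, hp =>
    simp only [List.head?_cons, List.getLast?_cons_cons, List.getLast?_singleton,
      Option.some.injEq] at hu hv
    subst hu hv
    exact List.isChain_pair.mp hp
  | a :: b :: c :: l, hu, hv, hp =>
    simp only [List.head?_cons, Option.some.injEq] at hu
    subst hu
    have := dist_add_le_pathWeight_of_ultrametric hultra zero_le_two hE hp hv
    linarith

/-- in a finite ultrametric with minimum nonzero distance at least 2,
any `(1+ε)`-spanner must contain every edge `(u,v)` with `d_X(u,v) < 2/ε`. -/
theorem stmt6 {X : Type*} [Finite X] (dX : X → X → ℝ)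
    (hsymm : ∀ u v, dX u v = dX v u) (hself : ∀ u, dX u u = 0)
    (hultra : ∀ u v w, dX u w ≤ max (dX u v) (dX v w))
    (hmin : ∀ u v : X, u ≠ v → 2 ≤ dX u v)
    (ε : ℝ) (hε0 : 0 < ε) (hε1 : ε < 1)
    (E : X → X → Prop) (hEsymm : Symmetric E) (hEirr : ∀ x, ¬ E x x)
    (hspan : IsSpanner dX E (1 + ε))
    (u v : X) (huv : u ≠ v) (hclose : dX u v < 2 / ε) :
    E u v :=
  stmt6_general dX hultra hmin ε hε0 E hEirr hspan u v huv hclose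
end

section
/- Let (X, d_X) be a finite metric space and let S ⊆ X be a subset of size m such that every pair of distinct points of S lies at distance < 2/ε, and suppose the minimum nonzero distance in X is at least 2 and d_X is an ultrametric. Then any (1+ε)-spanner of X contains all m(m-1)/2 edges between points of S, so it has at least m(m-1)/2 edges. -/
/-!
In an ultrametric whose nonzero distances are at least `2`, a path from `a` to `v` with `k ≥ 1`
edges weighs at least `d(a, v) + 2 (k - 1)`: if `b` is the second vertex then
`d(a, v) ≤ max (d(a, b), d(b, v))`, so either the first edge alone pays `d(a, v)` or, by induction,
the rest of the path does, and every other edge costs at least `2`. Hence if `ε d(u, v) < 2`, a path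
of weight at most `(1 + ε) d(u, v)` from `u` to `v` is the single edge `uv`.
-/

theorem Set.ncard_offDiag_of_finite {α : Type*} {s : Set α} (hs : s.Finite) :
    s.offDiag.ncard = s.ncard * (s.ncard - 1) := by
  obtain ⟨t, rfl⟩ := hs.exists_finset_coe
  rw [← Finset.coe_offDiag, Set.ncard_coe_finset, Set.ncard_coe_finset, Finset.offDiag_card,
    Nat.mul_sub_one]

section PathWeight

variable {X : Type*} {dX : X → X → ℝ}

theorem two_mul_length_le_pathWeight (hmin : ∀ u v : X, u ≠ v → 2 ≤ dX u v) :
    ∀ {a : X} {l : List X}, (a :: l).IsChain (· ≠ ·) → 2 * l.length ≤ pathWeight dX (a :: l)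
  | _, [], _ => by simp [pathWeight]
  | a, b :: l, hc => by
    rw [List.isChain_cons_cons] at hc
    have := two_mul_length_le_pathWeight hmin hc.2
    simp only [pathWeight, List.length_cons]
    push_cast
    linarith [hmin a b hc.1]

theorem dist_add_two_mul_length_le_pathWeight
    (hultra : ∀ u v w, dX u w ≤ max (dX u v) (dX v w))
    (hmin : ∀ u v : X, u ≠ v → 2 ≤ dX u v) :
    ∀ {a b v : X} {l : List X}, (a :: b :: l).IsChain (· ≠ ·) →
      (b :: l).getLast? = some v → dX a v + 2 * l.length ≤ pathWeight dX (a :: b :: l)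
  | a, b, v, [], _, hlast => by
    obtain rfl : b = v := by simpa using hlast
    simp [pathWeight]
  | a, b, v, c :: l, hc, hlast => by
    rw [List.isChain_cons_cons] at hc
    have hab := hmin a b hc.1
    change dX a v + 2 * ((l.length + 1 : ℕ) : ℝ) ≤ dX a b + pathWeight dX (b :: c :: l)
    push_cast
    rcases le_or_gt (dX a v) (dX a b) with h | h
    · have := two_mul_length_le_pathWeight (dX := dX) hmin hc.2
      simp only [List.length_cons, Nat.cast_add, Nat.cast_one] at this
      linarith
    · have hbv : dX a v ≤ dX b v := (le_max_iff.1 (hultra a b v)).resolve_left (not_le.2 h)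
      have := dist_add_two_mul_length_le_pathWeight hultra hmin hc.2
        (by rwa [List.getLast?_cons_cons] at hlast)
      linarith

theorem eq_pair_of_pathWeight_lt_dist_add_two
    (hultra : ∀ u v w, dX u w ≤ max (dX u v) (dX v w))
    (hmin : ∀ u v : X, u ≠ v → 2 ≤ dX u v) {p : List X} {u v : X}
    (hc : p.IsChain (· ≠ ·)) (hhead : p.head? = some u) (hlast : p.getLast? = some v)
    (huv : u ≠ v) (hw : pathWeight dX p < dX u v + 2) : p = [u, v] := by
  match p, hc, hhead, hlast with
  | [], _, hhead, _ => simp at hhead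
  | [a], _, hhead, hlast => simp_all
  | [a, b], _, hhead, hlast => simp_all
  | a :: b :: c :: l, hc, hhead, hlast =>
    obtain rfl : a = u := by simpa using hhead
    have := dist_add_two_mul_length_le_pathWeight hultra hmin hc
      (by rwa [List.getLast?_cons_cons] at hlast)
    simp only [List.length_cons, Nat.cast_add, Nat.cast_one] at this
    linarith [(l.length.cast_nonneg : (0 : ℝ) ≤ l.length)]

theorem IsSpanner.rel_of_mul_dist_lt {E : X → X → Prop} {ε : ℝ}
    (hultra : ∀ u v w, dX u w ≤ max (dX u v) (dX v w))
    (hmin : ∀ u v : X, u ≠ v → 2 ≤ dX u v) (hEirr : ∀ x, ¬ E x x)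
    (hspan : IsSpanner dX E (1 + ε)) {u v : X} (huv : u ≠ v) (hclose : ε * dX u v < 2) :
    E u v := by
  obtain ⟨p, hc, hhead, hlast, hw⟩ := hspan u v
  have hne : p.IsChain (· ≠ ·) := List.IsChain.imp (R := E)
    (fun a _ hab h => hEirr a (h ▸ hab)) hc
  obtain rfl := eq_pair_of_pathWeight_lt_dist_add_two hultra hmin hne hhead hlast huv
    (by linarith)
  exact List.isChain_pair.1 hc

end PathWeight

theorem stmt7_general {X : Type*} [Finite X] (dX : X → X → ℝ)
    (hultra : ∀ u v w, dX u w ≤ max (dX u v) (dX v w))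
    (hmin : ∀ u v : X, u ≠ v → 2 ≤ dX u v)
    (ε : ℝ) (hε0 : 0 < ε)
    (S : Set X) (m : ℕ) (hm : S.ncard = m)
    (hSclose : ∀ u ∈ S, ∀ v ∈ S, u ≠ v → dX u v < 2 / ε)
    (E : X → X → Prop) (hEirr : ∀ x, ¬ E x x)
    (hspan : IsSpanner dX E (1 + ε)) :
    (∀ u ∈ S, ∀ v ∈ S, u ≠ v → E u v) ∧
    m * (m - 1) ≤ Set.ncard {q : X × X | E q.1 q.2} := by
  have hS : ∀ u ∈ S, ∀ v ∈ S, u ≠ v → E u v := fun u hu v hv huv =>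
    hspan.rel_of_mul_dist_lt hultra hmin hEirr huv ((lt_div_iff₀' hε0).1 (hSclose u hu v hv huv))
  refine ⟨hS, ?_⟩
  calc m * (m - 1) = S.offDiag.ncard := by rw [Set.ncard_offDiag_of_finite S.toFinite, hm]
    _ ≤ Set.ncard {q : X × X | E q.1 q.2} :=
      Set.ncard_le_ncard fun q hq => hS _ hq.1 _ hq.2.1 hq.2.2

/-- if `S` is a set of `m` points, pairwise at distance `< 2/ε`, in a
finite ultrametric with minimum nonzero distance at least 2, then any
`(1+ε)`-spanner contains all edges inside `S`; hence it has at least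
`m(m-1)/2` edges, i.e. at least `m(m-1)` ordered edge pairs. -/
theorem stmt7 {X : Type*} [Finite X] (dX : X → X → ℝ)
    (hsymm : ∀ u v, dX u v = dX v u) (hself : ∀ u, dX u u = 0)
    (hultra : ∀ u v w, dX u w ≤ max (dX u v) (dX v w))
    (hmin : ∀ u v : X, u ≠ v → 2 ≤ dX u v)
    (ε : ℝ) (hε0 : 0 < ε) (hε1 : ε < 1)
    (S : Set X) (m : ℕ) (hm : S.ncard = m)
    (hSclose : ∀ u ∈ S, ∀ v ∈ S, u ≠ v → dX u v < 2 / ε)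
    (E : X → X → Prop) (hEsymm : Symmetric E) (hEirr : ∀ x, ¬ E x x)
    (hspan : IsSpanner dX E (1 + ε)) :
    (∀ u ∈ S, ∀ v ∈ S, u ≠ v → E u v) ∧
    m * (m - 1) ≤ Set.ncard {q : X × X | E q.1 q.2} :=
  stmt7_general dX hultra hmin ε hε0 S m hm hSclose E hEirr hspan
end

section
/- In the metric space X of n = (2^d)^L leaves of the labeled perfect 2^d-ary tree, the Hamiltonian path P_X visiting the leaves in left-to-right order has weight w(P_X) = (2^d − 1)·n^{1/d}·Σ_{i=0}^{L−1} (2^{d−1})^i, where L = (log₂ n)/d. In particular, for d = 1, w(P_X) = n·log₂ n. -/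
/-!
Write `b = 2^d` and let leaf `j` carry the base-`b` digits of `j`. Passing from leaf `j` to
leaf `j + 1` changes exactly the digits of positions `≤ v`, where `v` is the `b`-adic valuation
of `j + 1`, so this step has weight `2^(v+1)`. Among `1, …, b^L - 1` exactly `(b - 1) b^(L-1-v)`
numbers have valuation `v`, hence the weight is `∑_{v<L} (b - 1) b^(L-1-v) 2^(v+1)`, which is
the claimed closed form after reversing the order of summation.
-/

open Finset

/-- The `j`-th leaf of the perfect `2^d`-ary tree of depth `L` in left-to-right
order: the base-`2^d` digits of `j`, most significant first. -/
def leafOf (d L : ℕ) (j : ℕ) : Fin L → Fin (2 ^ d) :=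
  fun i => ⟨j / (2 ^ d) ^ (L - 1 - (i : ℕ)) % 2 ^ d, Nat.mod_lt _ (by positivity)⟩

theorem succ_mod_ne_mod {b : ℕ} (hb : b ≠ 1) (c : ℕ) : (c + 1) % b ≠ c % b := fun h =>
  hb <| Nat.dvd_one.mp <| Nat.modEq_zero_iff_dvd.mp <| Nat.ModEq.add_left_cancel' c h

theorem pow_sub_one_div_pow {b L k : ℕ} (hb : 0 < b) (hk : k ≤ L) :
    (b ^ L - 1) / b ^ k = b ^ (L - k) - 1 := by
  have hsplit : b ^ L = b ^ (L - k) * b ^ k := by rw [← pow_add, Nat.sub_add_cancel hk]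
  have hpos : 0 < b ^ k := pow_pos hb k
  have hpos' : 0 < b ^ (L - k) := pow_pos hb (L - k)
  apply Nat.div_eq_of_lt_le
  · rw [Nat.sub_one_mul, hsplit]
    omega
  · rw [Nat.sub_add_cancel hpos', hsplit]
    exact Nat.sub_lt (Nat.mul_pos hpos' hpos) one_pos

section Valuation

variable {b : ℕ}

theorem multiplicity_lt_of_lt_pow (hb : 1 < b) {m L : ℕ} (hm : 0 < m) (hmL : m < b ^ L) :
    multiplicity b m < L :=
  (Nat.pow_lt_pow_iff_right hb).mp <|
    (Nat.le_of_dvd hm (pow_multiplicity_dvd b m)).trans_lt hmL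

theorem pow_dvd_succ_iff (hb : 1 < b) (j k : ℕ) :
    b ^ k ∣ j + 1 ↔ k ≤ multiplicity b (j + 1) :=
  (Nat.finiteMultiplicity_iff.mpr ⟨hb.ne', j.succ_pos⟩).pow_dvd_iff_le_multiplicity

theorem succ_div_pow_mod_eq (hb : 1 < b) {j s : ℕ} (hs : multiplicity b (j + 1) < s) :
    (j + 1) / b ^ s % b = j / b ^ s % b := by
  rw [Nat.succ_div_of_not_dvd (by rw [pow_dvd_succ_iff hb]; omega)]

theorem succ_div_pow_multiplicity_mod_ne (hb : 1 < b) (j : ℕ) :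
    (j + 1) / b ^ multiplicity b (j + 1) % b ≠ j / b ^ multiplicity b (j + 1) % b := by
  rw [Nat.succ_div_of_dvd (pow_multiplicity_dvd b (j + 1))]
  exact succ_mod_ne_mod hb.ne' _

theorem card_filter_multiplicity_succ_eq (hb : 1 < b) {L k : ℕ} (hk : k < L) :
    #{j ∈ range (b ^ L - 1) | multiplicity b (j + 1) = k} = (b - 1) * b ^ (L - 1 - k) := by
  set S := range (b ^ L - 1)
  have hexact : S.filter (fun j => multiplicity b (j + 1) = k) =
      (S.filter (b ^ k ∣ · + 1)).filter (fun j => ¬ b ^ (k + 1) ∣ j + 1) := by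
    rw [filter_filter]
    refine filter_congr fun j _ => ?_
    rw [pow_dvd_succ_iff hb, pow_dvd_succ_iff hb]
    omega
  have hhigher : (S.filter (b ^ k ∣ · + 1)).filter (fun j => b ^ (k + 1) ∣ j + 1) =
      S.filter (b ^ (k + 1) ∣ · + 1) := by
    rw [filter_filter]
    exact filter_congr fun j _ => and_iff_right_of_imp (dvd_trans (pow_dvd_pow b k.le_succ))
  have hsplit := card_filter_add_card_filter_not (s := S.filter (b ^ k ∣ · + 1))
    (fun j => b ^ (k + 1) ∣ j + 1)
  rw [hhigher, ← hexact, Nat.card_multiples, Nat.card_multiples,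
    pow_sub_one_div_pow (by omega) hk.le, pow_sub_one_div_pow (k := k + 1) (by omega) hk,
    show L - k = L - 1 - k + 1 by omega, show L - (k + 1) = L - 1 - k by omega, pow_succ] at hsplit
  rw [Nat.sub_one_mul, mul_comm]
  have : 0 < b ^ (L - 1 - k) := pow_pos (by omega) _
  have : b ^ (L - 1 - k) ≤ b ^ (L - 1 - k) * b := Nat.le_mul_of_pos_right _ (by omega)
  omega

theorem sum_range_multiplicity_succ {M : Type*} [AddCommMonoid M] (hb : 1 < b) (L : ℕ)
    (f : ℕ → M) :
    ∑ j ∈ range (b ^ L - 1), f (multiplicity b (j + 1)) =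
      ∑ k ∈ range L, ((b - 1) * b ^ (L - 1 - k)) • f k := by
  have hmaps : ∀ j ∈ range (b ^ L - 1), multiplicity b (j + 1) ∈ range L := fun j hj =>
    mem_range.mpr <|
      multiplicity_lt_of_lt_pow hb (Nat.add_one_pos j) (by rw [mem_range] at hj; omega)
  rw [← sum_fiberwise_of_maps_to hmaps]
  refine sum_congr rfl fun k hk => ?_
  rw [sum_congr rfl fun j hj => by rw [(mem_filter.mp hj).2], sum_const,
    card_filter_multiplicity_succ_eq hb (mem_range.mp hk)]

end Valuation

section TreeMetric

variable {d L : ℕ} {u v : Fin L → Fin (2 ^ d)} {i : ℕ} (hi : i < L)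
  (hagree : ∀ k (hk : k < i), u ⟨k, hk.trans hi⟩ = v ⟨k, hk.trans hi⟩)
  (hne : u ⟨i, hi⟩ ≠ v ⟨i, hi⟩)
include hagree hne

theorem firstDiff_eq_of_agree_of_ne : firstDiff d L u v = i :=
  le_antisymm (Nat.sInf_le ⟨hi, hne⟩) <|
    le_csInf ⟨i, hi, hne⟩ fun k ⟨_, hk⟩ => not_lt.mp fun hlt => hk (hagree k hlt)

theorem treeDist_eq_of_agree_of_ne : treeDist d L u v = 2 ^ (L - i) := by
  rw [treeDist, if_neg fun h => hne (congrFun h _), firstDiff_eq_of_agree_of_ne hi hagree hne]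

end TreeMetric

theorem treeDist_leafOf_succ {d L j : ℕ} (hd : 1 ≤ d) (hj : j + 1 < (2 ^ d) ^ L) :
    treeDist d L (leafOf d L j) (leafOf d L (j + 1)) = 2 ^ (multiplicity (2 ^ d) (j + 1) + 1) := by
  have hb : 1 < 2 ^ d := Nat.one_lt_two_pow (by omega)
  have hv := multiplicity_lt_of_lt_pow hb (Nat.add_one_pos j) hj
  rw [treeDist_eq_of_agree_of_ne (i := L - 1 - multiplicity (2 ^ d) (j + 1)) (by omega)]
  · congr 1
    omega
  · intro k hk
    ext
    exact (succ_div_pow_mod_eq hb (s := L - 1 - k) (by omega)).symm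
  · intro h
    have h' := congrArg Fin.val h
    simp only [leafOf, show L - 1 - (L - 1 - multiplicity (2 ^ d) (j + 1)) =
      multiplicity (2 ^ d) (j + 1) by omega] at h'
    exact succ_div_pow_multiplicity_mod_ne hb j h'.symm

theorem sum_range_nsmul_two_pow_succ {d : ℕ} (hd : 1 ≤ d) (L : ℕ) :
    ∑ k ∈ range L, ((2 ^ d - 1) * (2 ^ d) ^ (L - 1 - k)) • (2 : ℝ) ^ (k + 1) =
      ((2 : ℝ) ^ d - 1) * 2 ^ L * ∑ i ∈ range L, ((2 : ℝ) ^ (d - 1)) ^ i := by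
  rw [mul_sum, ← sum_range_reflect]
  refine sum_congr rfl fun i hi => ?_
  obtain ⟨e, rfl⟩ : ∃ e, d = e + 1 := ⟨d - 1, by omega⟩
  have hiL := mem_range.mp hi
  rw [nsmul_eq_mul, show L - 1 - (L - 1 - i) = i by omega, show L - 1 - i + 1 = L - i by omega]
  push_cast [Nat.one_le_two_pow]
  rw [← pow_mul, ← pow_mul, mul_assoc, mul_assoc, ← pow_add, ← pow_add]
  congr 2
  rw [add_mul, one_mul]
  omega

theorem stmt10_general (d L : ℕ) (hd : 1 ≤ d) :
    (∑ j ∈ Finset.range ((2 ^ d) ^ L - 1),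
        treeDist d L (leafOf d L j) (leafOf d L (j + 1))) =
      ((2 : ℝ) ^ d - 1) * 2 ^ L * ∑ i ∈ Finset.range L, ((2 : ℝ) ^ (d - 1)) ^ i ∧
    (d = 1 →
      (∑ j ∈ Finset.range ((2 ^ d) ^ L - 1),
          treeDist d L (leafOf d L j) (leafOf d L (j + 1))) = (2 : ℝ) ^ L * L) := by
  have hweight :
      ∑ j ∈ range ((2 ^ d) ^ L - 1), treeDist d L (leafOf d L j) (leafOf d L (j + 1)) =
      ((2 : ℝ) ^ d - 1) * 2 ^ L * ∑ i ∈ range L, ((2 : ℝ) ^ (d - 1)) ^ i :=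
    calc _ = ∑ j ∈ range ((2 ^ d) ^ L - 1), (2 : ℝ) ^ (multiplicity (2 ^ d) (j + 1) + 1) :=
          sum_congr rfl fun j hj => treeDist_leafOf_succ hd (by rw [mem_range] at hj; omega)
      _ = ∑ k ∈ range L, ((2 ^ d - 1) * (2 ^ d) ^ (L - 1 - k)) • (2 : ℝ) ^ (k + 1) :=
          sum_range_multiplicity_succ (Nat.one_lt_two_pow (by omega)) L fun v => (2 : ℝ) ^ (v + 1)
      _ = _ := sum_range_nsmul_two_pow_succ hd L
  refine ⟨hweight, ?_⟩
  rintro rfl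
  rw [hweight]
  norm_num

/-- the left-to-right Hamiltonian path on the `n = (2^d)^L` leaves
has weight `(2^d − 1) · n^(1/d) · Σ_{i<L} (2^(d−1))^i` (note `n^(1/d) = 2^L`);
in particular for `d = 1` the weight is `n·log₂ n = 2^L·L`. -/
theorem stmt10 (d L : ℕ) (hd : 1 ≤ d) (hL : 1 ≤ L) :
    (∑ j ∈ Finset.range ((2 ^ d) ^ L - 1),
        treeDist d L (leafOf d L j) (leafOf d L (j + 1))) =
      ((2 : ℝ) ^ d - 1) * 2 ^ L * ∑ i ∈ Finset.range L, ((2 : ℝ) ^ (d - 1)) ^ i ∧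
    (d = 1 →
      (∑ j ∈ Finset.range ((2 ^ d) ^ L - 1),
          treeDist d L (leafOf d L j) (leafOf d L (j + 1))) = (2 : ℝ) ^ L * L) :=
  stmt10_general d L hd
end

section
/- For the n-point metric space X of leaves of the labeled perfect 2^d-ary tree with d ≥ 2, the minimum spanning tree of X has weight at most 4n. -/
open Classical in
/-- The total weight of the graph `(X,E)` with edge weights equal to distances
(each ordered pair counted once after dividing by 2). -/
noncomputable def graphWeight {X : Type*} [Fintype X] (dX : X → X → ℝ)
    (E : X → X → Prop) : ℝ :=
  (∑ u, ∑ v, if E u v then dX u v else 0) / 2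

/-! Write a leaf as its digit string `u : Fin L → Fin (2 ^ d)`, read from the root down, and
join every leaf `u ≠ 0` to the leaf obtained by zeroing its deepest nonzero digit. Along these
links the number of nonzero digits drops, so they form a spanning tree rooted at `0`.
Appending a bottom digit doubles every distance between leaves with the same last digit, while the
new links that only change the last digit cost `2`; hence the weight `S L` of the tree satisfies
`S (L + 1) ≤ 2 S L + 2 · 2 ^ d · (2 ^ d) ^ L`, and `S L ≤ 4 (2 ^ d) ^ L` follows by induction
once `2 ^ d ≥ 4`. -/

open Finset

theorem Nat.card_subtype_ne_add_one {V : Type*} [Finite V] (r : V) :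
    Nat.card {v // v ≠ r} + 1 = Nat.card V := by
  have := Fintype.ofFinite V
  classical
  rw [Nat.card_eq_fintype_card, Nat.card_eq_fintype_card, Fintype.card_subtype_compl,
    Fintype.card_subtype_eq]
  have : 0 < Fintype.card V := Fintype.card_pos_iff.2 ⟨r⟩
  omega

theorem SimpleGraph.isTree_fromRel_of_parent {V : Type*} [Finite V] (p : V → V) (r : V)
    (f : V → ℕ) (hr : p r = r) (hf : ∀ v ≠ r, f (p v) < f v) :
    (SimpleGraph.fromRel fun u v => v = p u).IsTree := by
  set G := SimpleGraph.fromRel fun u v : V => v = p u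
  have hne : ∀ v ≠ r, v ≠ p v := fun v hv h => (hf v hv).ne (congrArg f h.symm)
  have hreach : ∀ v, G.Reachable v r := by
    intro v
    induction h : f v using Nat.strong_induction_on generalizing v with
    | _ n ih =>
      by_cases hv : v = r
      · exact hv ▸ .refl _
      · have hadj : G.Adj v (p v) := by simp [G, hne v hv]
        exact hadj.reachable.trans (ih _ (h ▸ hf v hv) _ rfl)
  have hconn : G.Connected :=
    (SimpleGraph.connected_iff _).2 ⟨fun u v => (hreach u).trans (hreach v).symm, ⟨r⟩⟩
  refine SimpleGraph.isTree_iff_connected_and_card.2 ⟨hconn, le_antisymm ?_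
    hconn.card_vert_le_card_edgeSet_add_one⟩
  -- every edge is `s(v, p v)` for some `v ≠ r`, so there are at most `|V| - 1` of them
  let toEdge : {v // v ≠ r} → G.edgeSet := fun v => ⟨s(v, p v), by simp [G, hne v v.2]⟩
  have hsurj : Function.Surjective toEdge := by
    rintro ⟨e, he⟩
    induction e using Sym2.ind with
    | _ u w =>
    obtain ⟨huw, rfl | rfl⟩ := (SimpleGraph.fromRel_adj _ _ _).1 (G.mem_edgeSet.1 he)
    · exact ⟨⟨u, fun h => huw (by rw [h, hr])⟩, rfl⟩
    · exact ⟨⟨w, fun h => huw (by rw [h, hr])⟩, Subtype.ext Sym2.eq_swap⟩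
  calc Nat.card G.edgeSet + 1 ≤ Nat.card {v // v ≠ r} + 1 :=
        Nat.add_le_add_right (Nat.card_le_card_of_surjective _ hsurj) 1
    _ = Nat.card V := Nat.card_subtype_ne_add_one r

theorem graphWeight_fromRel_le {V : Type*} [Fintype V] (dX : V → V → ℝ)
    (hsymm : ∀ u v, dX u v = dX v u) (hnonneg : ∀ u v, 0 ≤ dX u v) (p : V → V) :
    graphWeight dX (SimpleGraph.fromRel fun u v => v = p u).Adj ≤ ∑ u, dX u (p u) := by
  classical
  rw [graphWeight, div_le_iff₀ two_pos]
  calc _ ≤ ∑ u, ∑ v, ((if v = p u then dX u v else 0) + (if u = p v then dX u v else 0)) := by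
        refine sum_le_sum fun u _ => sum_le_sum fun v _ => ?_
        have := hnonneg u v
        split_ifs with hA h₁ h₂ <;> first
          | linarith
          | exact absurd ((SimpleGraph.fromRel_adj _ _ _).1 hA).2 (by tauto)
    _ = (∑ u, dX u (p u)) * 2 := by
      rw [mul_two]
      simp only [sum_add_distrib, sum_ite_eq', mem_univ, if_true]
      congr 1
      rw [sum_comm]
      exact sum_congr rfl fun v _ => by rw [sum_ite_eq', if_pos (mem_univ _), hsymm]

section EraseLastNonzero

variable {α : Type*} [Zero α]

@[simp]
theorem Fin.snoc_zero_zero {L : ℕ} :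
    (Fin.snoc (0 : Fin L → α) 0 : Fin (L + 1) → α) = 0 := by
  ext i
  induction i using Fin.lastCases <;> simp

variable [DecidableEq α]

def eraseLastNonzero : {L : ℕ} → (Fin L → α) → Fin L → α
  | 0, v => v
  | _ + 1, v => if v (Fin.last _) = 0 then Fin.snoc (eraseLastNonzero (Fin.init v)) 0
      else Fin.snoc (Fin.init v) 0

variable {L : ℕ}

@[simp]
theorem eraseLastNonzero_snoc (u : Fin L → α) (a : α) :
    eraseLastNonzero (Fin.snoc u a : Fin (L + 1) → α) =
      if a = 0 then Fin.snoc (eraseLastNonzero u) 0 else Fin.snoc u 0 := by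
  simp [eraseLastNonzero]

@[simp]
theorem eraseLastNonzero_zero : eraseLastNonzero (0 : Fin L → α) = 0 := by
  induction L with
  | zero => rfl
  | succ L ih =>
    rw [← Fin.snoc_zero_zero, eraseLastNonzero_snoc, if_pos rfl, ih]

theorem card_filter_snoc_ne_zero (u : Fin L → α) (a : α) :
    #{i | (Fin.snoc u a : Fin (L + 1) → α) i ≠ 0} =
      #{i | u i ≠ 0} + if a = 0 then 0 else 1 := by
  simp only [card_filter, Fin.sum_univ_castSucc, Fin.snoc_castSucc, Fin.snoc_last]
  split_ifs <;> simp_all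

theorem card_eraseLastNonzero_lt {v : Fin L → α} (hv : v ≠ 0) :
    #{i | eraseLastNonzero v i ≠ 0} < #{i | v i ≠ 0} := by
  induction L with
  | zero => exact absurd (Subsingleton.elim v 0) hv
  | succ L ih =>
    induction v using Fin.snocCases with
    | _ u a =>
    by_cases ha : a = 0
    · subst ha
      have hu : u ≠ 0 := by rintro rfl; simp at hv
      simpa [card_filter_snoc_ne_zero] using ih hu
    · simp [card_filter_snoc_ne_zero, ha]

end EraseLastNonzero

section TreeDist

variable {d L : ℕ}

theorem firstDiff_eq {u v : Fin L → Fin (2 ^ d)} {k : ℕ} (hk : k < L)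
    (hne : u ⟨k, hk⟩ ≠ v ⟨k, hk⟩)
    (hagree : ∀ i (hi : i < k), u ⟨i, hi.trans hk⟩ = v ⟨i, hi.trans hk⟩) :
    firstDiff d L u v = k :=
  le_antisymm (Nat.sInf_le ⟨hk, hne⟩) (le_csInf ⟨k, hk, hne⟩ fun i ⟨_, h⟩ =>
    not_lt.1 fun hik => h (hagree i hik))

theorem firstDiff_spec {u v : Fin L → Fin (2 ^ d)} (huv : u ≠ v) :
    ∃ hk : firstDiff d L u v < L, u ⟨_, hk⟩ ≠ v ⟨_, hk⟩ ∧
      ∀ i (hi : i < firstDiff d L u v), u ⟨i, hi.trans hk⟩ = v ⟨i, hi.trans hk⟩ := by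
  obtain ⟨j, hj⟩ := Function.ne_iff.1 huv
  obtain ⟨hk, hne⟩ :=
    Nat.sInf_mem (s := {i | ∃ hi : i < L, u ⟨i, hi⟩ ≠ v ⟨i, hi⟩}) ⟨j, j.2, hj⟩
  exact ⟨hk, hne, fun i hi => not_not.1 fun h => Nat.notMem_of_lt_sInf hi ⟨_, h⟩⟩

theorem treeDist_comm (u v : Fin L → Fin (2 ^ d)) : treeDist d L u v = treeDist d L v u := by
  simp only [treeDist, firstDiff, eq_comm (a := u), ne_comm (a := u _)]

theorem treeDist_nonneg (u v : Fin L → Fin (2 ^ d)) : 0 ≤ treeDist d L u v := by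
  unfold treeDist; positivity

theorem treeDist_snoc_snoc (u w : Fin L → Fin (2 ^ d)) (a : Fin (2 ^ d)) :
    treeDist d (L + 1) (Fin.snoc u a) (Fin.snoc w a) = 2 * treeDist d L u w := by
  by_cases huw : u = w
  · simp [treeDist, huw]
  obtain ⟨hk, hne, hagree⟩ := firstDiff_spec huw
  have hfd : firstDiff d (L + 1) (Fin.snoc u a) (Fin.snoc w a) = firstDiff d L u w :=
    firstDiff_eq (hk.trans L.lt_succ_self) (by simpa [Fin.snoc, hk] using hne) fun i hi => by
      simpa [Fin.snoc, hi.trans hk] using hagree i hi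
  have hsnoc : (Fin.snoc u a : Fin (L + 1) → Fin (2 ^ d)) ≠ Fin.snoc w a := fun h =>
    huw (by simpa using congrArg Fin.init h)
  rw [treeDist, treeDist, if_neg hsnoc, if_neg huw, hfd, Nat.sub_add_comm hk.le, pow_succ,
    mul_comm]

theorem treeDist_snoc_snoc_of_ne (u : Fin L → Fin (2 ^ d)) {a b : Fin (2 ^ d)} (hab : a ≠ b) :
    treeDist d (L + 1) (Fin.snoc u a) (Fin.snoc u b) = 2 := by
  have hfd : firstDiff d (L + 1) (Fin.snoc u a) (Fin.snoc u b) = L :=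
    firstDiff_eq L.lt_succ_self (by simpa [Fin.snoc] using hab) fun i hi => by
      simp [Fin.snoc, hi]
  have hsnoc : (Fin.snoc u a : Fin (L + 1) → Fin (2 ^ d)) ≠ Fin.snoc u b := fun h =>
    hab (by simpa using congrFun h (Fin.last L))
  rw [treeDist, if_neg hsnoc, hfd, Nat.add_sub_cancel_left, pow_one]

theorem treeDist_snoc_eraseLastNonzero (u : Fin L → Fin (2 ^ d)) (a : Fin (2 ^ d)) :
    treeDist d (L + 1) (Fin.snoc u a) (eraseLastNonzero (Fin.snoc u a)) =
      if a = 0 then 2 * treeDist d L u (eraseLastNonzero u) else 2 := by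
  rw [eraseLastNonzero_snoc]
  split_ifs with ha
  · rw [ha, treeDist_snoc_snoc]
  · exact treeDist_snoc_snoc_of_ne u ha

theorem sum_treeDist_eraseLastNonzero_succ :
    ∑ v : Fin (L + 1) → Fin (2 ^ d), treeDist d (L + 1) v (eraseLastNonzero v) =
      2 * ∑ u : Fin L → Fin (2 ^ d), treeDist d L u (eraseLastNonzero u) +
        ∑ _a ∈ ({0}ᶜ : Finset (Fin (2 ^ d))), ∑ _u : Fin L → Fin (2 ^ d), (2 : ℝ) := by
  rw [← Fintype.sum_equiv (Fin.snocEquiv fun _ => Fin (2 ^ d)) (fun p => treeDist d (L + 1)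
    (Fin.snoc p.2 p.1) (eraseLastNonzero (Fin.snoc p.2 p.1))) _ fun _ => rfl,
    Fintype.sum_prod_type, Fintype.sum_eq_add_sum_compl (0 : Fin (2 ^ d))]
  simp only [treeDist_snoc_eraseLastNonzero, if_true, ← mul_sum]
  congr 1
  refine sum_congr rfl fun a ha => ?_
  simp only [if_neg (by simpa using ha : a ≠ 0)]

end TreeDist

theorem sum_treeDist_eraseLastNonzero_le {d : ℕ} (hd : 2 ≤ d) (L : ℕ) :
    ∑ u : Fin L → Fin (2 ^ d), treeDist d L u (eraseLastNonzero u) ≤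
      4 * (2 ^ d : ℝ) ^ L := by
  have hm : (4 : ℝ) ≤ 2 ^ d := le_trans (by norm_num) (pow_le_pow_right₀ one_le_two hd)
  induction L with
  | zero => simp [eraseLastNonzero, treeDist]
  | succ L ih =>
    rw [sum_treeDist_eraseLastNonzero_succ]
    set S := ∑ u : Fin L → Fin (2 ^ d), treeDist d L u (eraseLastNonzero u)
    calc _ ≤ 2 * S + ∑ _a : Fin (2 ^ d), ∑ _u : Fin L → Fin (2 ^ d), (2 : ℝ) := by
          gcongr
          exact subset_univ _
      _ = 2 * S + 2 ^ d * (2 ^ d) ^ L * 2 := by simp [mul_assoc]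
      _ ≤ 4 * (2 ^ d) ^ (L + 1) := by
          rw [pow_succ]
          nlinarith [pow_nonneg (by positivity : (0 : ℝ) ≤ 2 ^ d) L]

/-- for `d ≥ 2`, the minimum spanning tree of the `n = (2^d)^L`-point
tree metric has weight at most `4n` (i.e. some spanning tree has weight `≤ 4n`). -/
theorem stmt12 (d L : ℕ) (hd : 2 ≤ d) :
    ∃ T : SimpleGraph (Fin L → Fin (2 ^ d)), T.IsTree ∧
      graphWeight (treeDist d L) T.Adj ≤ 4 * (((2 ^ d) ^ L : ℕ) : ℝ) := by
  refine ⟨SimpleGraph.fromRel fun u v => v = eraseLastNonzero u,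
    SimpleGraph.isTree_fromRel_of_parent _ 0 (fun v => #{i | v i ≠ 0}) eraseLastNonzero_zero
      fun _ hv => card_eraseLastNonzero_lt hv, ?_⟩
  calc _ ≤ ∑ u, treeDist d L u (eraseLastNonzero u) :=
        graphWeight_fromRel_le _ treeDist_comm treeDist_nonneg _
    _ ≤ 4 * (2 ^ d : ℝ) ^ L := sum_treeDist_eraseLastNonzero_le hd L
    _ = 4 * (((2 ^ d) ^ L : ℕ) : ℝ) := by push_cast; rfl
end
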